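/- arXiv:2302.07810 — 2 statements merged into one kernel-verified Lean document; each statement's English description precedes it below -/
import Mathlib

section
/- (Fox, one direction) If C is a symmetric monoidal category equipped with natural transformations δ_A : A → A ⊗ A and ε_A : A → 1 making every object a cocommutative comonoid, such that δ and ε are monoidal natural transformations (δ_{A⊗B} is the collated tensor comultiplication and ε_{A⊗B} = ε_A ⊗ ε_B up to unitor, with δ_1 and ε_1 the coherence isomorphisms), then the monoidal unit 1 is a terminal object of C. -/
open CategoryTheory CategoryTheory.Limits MonoidalCategory

/-- The canonical middle-swap morphism built from associators and the braiding. -/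
def middleSwap {C : Type*} [Category C] [MonoidalCategory C] [SymmetricCategory C]
    (A B : C) : (A ⊗ A) ⊗ (B ⊗ B) ⟶ (A ⊗ B) ⊗ (A ⊗ B) :=
  (α_ A A (B ⊗ B)).hom ≫ (𝟙 A ⊗ₘ (α_ A B B).inv) ≫
    (𝟙 A ⊗ₘ ((β_ A B).hom ⊗ₘ 𝟙 B)) ≫ (𝟙 A ⊗ₘ (α_ B A B).hom) ≫ (α_ A B (A ⊗ B)).inv

theorem stmt_11_general {C : Type*} [Category C] [MonoidalCategory C]
    (ε : ∀ A : C, A ⟶ 𝟙_ C)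
    (ε_nat : ∀ {A B : C} (f : A ⟶ B), f ≫ ε B = ε A)
    (ε_unit : ε (𝟙_ C) = 𝟙 (𝟙_ C)) :
    Nonempty (IsTerminal (𝟙_ C)) :=
  -- Naturality of `ε` at `f : A ⟶ 𝟙_ C` reads `f ≫ ε (𝟙_ C) = ε A`, and `ε (𝟙_ C)` is the identity.
  ⟨IsTerminal.ofUniqueHom ε fun A f => by simpa [ε_unit] using ε_nat f⟩

/-- (Fox, one direction) If a symmetric monoidal category is equipped with natural
transformations `δ` and `ε` making every object a cocommutative comonoid, compatibly
with the monoidal structure, then the monoidal unit is terminal. -/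
theorem stmt_11 {C : Type*} [Category C] [MonoidalCategory C] [SymmetricCategory C]
    (δ : ∀ A : C, A ⟶ A ⊗ A) (ε : ∀ A : C, A ⟶ 𝟙_ C)
    (δ_nat : ∀ {A B : C} (f : A ⟶ B), f ≫ δ B = δ A ≫ (f ⊗ₘ f))
    (ε_nat : ∀ {A B : C} (f : A ⟶ B), f ≫ ε B = ε A)
    (coassoc : ∀ A : C, δ A ≫ (δ A ⊗ₘ 𝟙 A) ≫ (α_ A A A).hom = δ A ≫ (𝟙 A ⊗ₘ δ A))
    (counit_left : ∀ A : C, δ A ≫ (ε A ⊗ₘ 𝟙 A) ≫ (λ_ A).hom = 𝟙 A)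
    (counit_right : ∀ A : C, δ A ≫ (𝟙 A ⊗ₘ ε A) ≫ (ρ_ A).hom = 𝟙 A)
    (cocomm : ∀ A : C, δ A ≫ (β_ A A).hom = δ A)
    (δ_tensor : ∀ A B : C, δ (A ⊗ B) = (δ A ⊗ₘ δ B) ≫ middleSwap A B)
    (ε_tensor : ∀ A B : C, ε (A ⊗ B) = (ε A ⊗ₘ ε B) ≫ (λ_ (𝟙_ C)).hom)
    (δ_unit : δ (𝟙_ C) = (λ_ (𝟙_ C)).inv)
    (ε_unit : ε (𝟙_ C) = 𝟙 (𝟙_ C)) :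
    Nonempty (IsTerminal (𝟙_ C)) :=
  stmt_11_general ε ε_nat ε_unit
end

section
/- (Fox, products direction) Under the hypotheses of Fox's theorem, for all objects A, B the tensor product A ⊗ B, with projections p₁ = (1_A ⊗ ε_B) ∘ (unitor) and p₂ = (ε_A ⊗ 1_B) ∘ (unitor), is a categorical product of A and B: for any f : X → A and g : X → B the morphism (f ⊗ g) ∘ δ_X : X → A ⊗ B is the unique morphism whose composites with p₁, p₂ are f and g respectively. -/
open CategoryTheory CategoryTheory.Limits MonoidalCategory

/-! The projection equations are the counit laws of `X`, once naturality of `ε` has moved the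
discarded factor past `f ⊗ g`. For uniqueness, naturality of `δ` gives
`h = δ X ≫ ((h ≫ p₁) ⊗ (h ≫ p₂))` as soon as `δ (A ⊗ B) ≫ (p₁ ⊗ p₂) = 𝟙`; writing
`δ (A ⊗ B) = (δ A ⊗ δ B) ≫ tensorμ` and sliding the two inner counits back across `tensorμ`,
that identity becomes the tensor product of the counit laws of `A` and `B`. -/

section Monoidal

variable {C : Type*} [Category C] [MonoidalCategory C]

lemma tensorHom_comp_discard_right {X A B : C} {e : X ⟶ 𝟙_ C} {e' : B ⟶ 𝟙_ C}
    (f : X ⟶ A) {g : X ⟶ B} (hg : g ≫ e' = e) :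
    (f ⊗ₘ g) ≫ A ◁ e' ≫ (ρ_ A).hom = X ◁ e ≫ (ρ_ X).hom ≫ f := by
  simp [tensorHom_def', ← whisker_exchange_assoc, ← hg]

lemma tensorHom_comp_discard_left {X A B : C} {e : X ⟶ 𝟙_ C} {e' : A ⟶ 𝟙_ C}
    {f : X ⟶ A} (g : X ⟶ B) (hf : f ≫ e' = e) :
    (f ⊗ₘ g) ≫ e' ▷ B ≫ (λ_ B).hom = e ▷ X ≫ (λ_ X).hom ≫ g := by
  simp [MonoidalCategory.tensorHom_def, whisker_exchange_assoc, ← hf]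

lemma eq_comp_tensorHom_of_comp_tensorHom_eq_id {X A B : C} {dX : X ⟶ X ⊗ X}
    {d : A ⊗ B ⟶ (A ⊗ B) ⊗ (A ⊗ B)} {p : A ⊗ B ⟶ A} {q : A ⊗ B ⟶ B} (h : X ⟶ A ⊗ B)
    (hnat : h ≫ d = dX ≫ (h ⊗ₘ h)) (hid : d ≫ (p ⊗ₘ q) = 𝟙 (A ⊗ B)) :
    h = dX ≫ ((h ≫ p) ⊗ₘ (h ≫ q)) :=
  calc
    h = h ≫ d ≫ (p ⊗ₘ q) := by rw [hid, Category.comp_id]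
    _ = dX ≫ ((h ≫ p) ⊗ₘ (h ≫ q)) := by
      rw [reassoc_of% hnat, tensorHom_comp_tensorHom]

end Monoidal

section Braided

variable {C : Type*} [Category C] [MonoidalCategory C] [BraidedCategory C]

lemma tensorμ_comp_rightUnitor_tensorHom_leftUnitor (A B : C) :
    tensorμ A (𝟙_ C) (𝟙_ C) B ≫ ((ρ_ A).hom ⊗ₘ (λ_ B).hom) = (ρ_ A).hom ⊗ₘ (λ_ B).hom := by
  rw [tensorμ, braiding_tensorUnit_left]
  monoidal

lemma tensorμ_comp_discard_inner {A B : C} (a : A ⟶ 𝟙_ C) (b : B ⟶ 𝟙_ C) :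
    tensorμ A A B B ≫ ((A ◁ b ≫ (ρ_ A).hom) ⊗ₘ (a ▷ B ≫ (λ_ B).hom)) =
      (A ◁ a ≫ (ρ_ A).hom) ⊗ₘ (b ▷ B ≫ (λ_ B).hom) := by
  have h := tensorμ_natural_assoc (𝟙 A) a b (𝟙 B) ((ρ_ A).hom ⊗ₘ (λ_ B).hom)
  simp only [id_tensorHom, tensorHom_id] at h
  rw [← tensorHom_comp_tensorHom, ← tensorHom_comp_tensorHom, ← h,
    tensorμ_comp_rightUnitor_tensorHom_leftUnitor]

lemma tensor_comul_comp_proj_tensorHom_proj {A B : C} {dA : A ⟶ A ⊗ A} {dB : B ⟶ B ⊗ B}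
    {a : A ⟶ 𝟙_ C} {b : B ⟶ 𝟙_ C} (ha : dA ≫ A ◁ a ≫ (ρ_ A).hom = 𝟙 A)
    (hb : dB ≫ b ▷ B ≫ (λ_ B).hom = 𝟙 B) :
    ((dA ⊗ₘ dB) ≫ tensorμ A A B B) ≫ ((A ◁ b ≫ (ρ_ A).hom) ⊗ₘ (a ▷ B ≫ (λ_ B).hom)) =
      𝟙 (A ⊗ B) := by
  rw [Category.assoc, tensorμ_comp_discard_inner, tensorHom_comp_tensorHom, ha, hb,
    id_tensorHom_id]

end Braided

lemma middleSwap_eq_tensorμ {C : Type*} [Category C] [MonoidalCategory C] [SymmetricCategory C]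
    (A B : C) : middleSwap A B = tensorμ A A B B := by
  simp only [middleSwap, tensorμ, id_tensorHom, tensorHom_id]

theorem stmt_13_general {C : Type*} [Category C] [MonoidalCategory C] [SymmetricCategory C]
    (δ : ∀ A : C, A ⟶ A ⊗ A) (ε : ∀ A : C, A ⟶ 𝟙_ C)
    (δ_nat : ∀ {A B : C} (f : A ⟶ B), f ≫ δ B = δ A ≫ (f ⊗ₘ f))
    (ε_nat : ∀ {A B : C} (f : A ⟶ B), f ≫ ε B = ε A)
    (counit_left : ∀ A : C, δ A ≫ (ε A ⊗ₘ 𝟙 A) ≫ (λ_ A).hom = 𝟙 A)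
    (counit_right : ∀ A : C, δ A ≫ (𝟙 A ⊗ₘ ε A) ≫ (ρ_ A).hom = 𝟙 A)
    (δ_tensor : ∀ A B : C, δ (A ⊗ B) = (δ A ⊗ₘ δ B) ≫ middleSwap A B)
    (A B X : C) (f : X ⟶ A) (g : X ⟶ B) :
    let p₁ : A ⊗ B ⟶ A := (𝟙 A ⊗ₘ ε B) ≫ (ρ_ A).hom
    let p₂ : A ⊗ B ⟶ B := (ε A ⊗ₘ 𝟙 B) ≫ (λ_ B).hom
    (δ X ≫ (f ⊗ₘ g)) ≫ p₁ = f ∧ (δ X ≫ (f ⊗ₘ g)) ≫ p₂ = g ∧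
    ∀ h : X ⟶ A ⊗ B, h ≫ p₁ = f → h ≫ p₂ = g → h = δ X ≫ (f ⊗ₘ g) := by
  simp only [id_tensorHom, tensorHom_id] at counit_left counit_right ⊢
  refine ⟨?_, ?_, fun h hp₁ hp₂ => ?_⟩
  · rw [Category.assoc, tensorHom_comp_discard_right f (ε_nat g), reassoc_of% counit_right]
  · rw [Category.assoc, tensorHom_comp_discard_left g (ε_nat f), reassoc_of% counit_left]
  · have hid := tensor_comul_comp_proj_tensorHom_proj (counit_right A) (counit_left B)
    rw [← middleSwap_eq_tensorμ, ← δ_tensor] at hid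
    rw [← hp₁, ← hp₂]
    exact eq_comp_tensorHom_of_comp_tensorHom_eq_id h (δ_nat h) hid

/-- (Fox, products direction) Under the Fox hypotheses, `A ⊗ B` with the counit-induced
projections is a categorical product of `A` and `B`, with pairing `δ X ≫ (f ⊗ g)`. -/
theorem stmt_13 {C : Type*} [Category C] [MonoidalCategory C] [SymmetricCategory C]
    (δ : ∀ A : C, A ⟶ A ⊗ A) (ε : ∀ A : C, A ⟶ 𝟙_ C)
    (δ_nat : ∀ {A B : C} (f : A ⟶ B), f ≫ δ B = δ A ≫ (f ⊗ₘ f))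
    (ε_nat : ∀ {A B : C} (f : A ⟶ B), f ≫ ε B = ε A)
    (coassoc : ∀ A : C, δ A ≫ (δ A ⊗ₘ 𝟙 A) ≫ (α_ A A A).hom = δ A ≫ (𝟙 A ⊗ₘ δ A))
    (counit_left : ∀ A : C, δ A ≫ (ε A ⊗ₘ 𝟙 A) ≫ (λ_ A).hom = 𝟙 A)
    (counit_right : ∀ A : C, δ A ≫ (𝟙 A ⊗ₘ ε A) ≫ (ρ_ A).hom = 𝟙 A)
    (cocomm : ∀ A : C, δ A ≫ (β_ A A).hom = δ A)
    (δ_tensor : ∀ A B : C, δ (A ⊗ B) = (δ A ⊗ₘ δ B) ≫ middleSwap A B)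
    (ε_tensor : ∀ A B : C, ε (A ⊗ B) = (ε A ⊗ₘ ε B) ≫ (λ_ (𝟙_ C)).hom)
    (δ_unit : δ (𝟙_ C) = (λ_ (𝟙_ C)).inv)
    (ε_unit : ε (𝟙_ C) = 𝟙 (𝟙_ C))
    (A B X : C) (f : X ⟶ A) (g : X ⟶ B) :
    let p₁ : A ⊗ B ⟶ A := (𝟙 A ⊗ₘ ε B) ≫ (ρ_ A).hom
    let p₂ : A ⊗ B ⟶ B := (ε A ⊗ₘ 𝟙 B) ≫ (λ_ B).hom
    (δ X ≫ (f ⊗ₘ g)) ≫ p₁ = f ∧ (δ X ≫ (f ⊗ₘ g)) ≫ p₂ = g ∧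
    ∀ h : X ⟶ A ⊗ B, h ≫ p₁ = f → h ≫ p₂ = g → h = δ X ≫ (f ⊗ₘ g) :=
  stmt_13_general δ ε δ_nat ε_nat counit_left counit_right δ_tensor A B X f g
end
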